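/- If a perfect matching H in G_I has weight ℓ(H), then the corresponding room assignment S (pairs of matched patients as double rooms, patients matched to auxiliary vertices as singles) satisfies w(S) = ℓ(H); consequently a minimum-weight perfect matching yields an optimal RMP solution. -/

import Mathlib

open Finset

/-- Capacity of the rooms: rooms `0,…,R1-1` are single rooms, rooms `R1,…,R1+R2-1`
are double rooms. -/
def roomCap (R1 R2 : ℕ) (r : Fin (R1 + R2)) : ℕ := if (r : ℕ) < R1 then 1 else 2

/-- A feasible room assignment: capacities are respected and rooms are sex-homogeneous. -/
def FeasibleAssign {P : Type*} [Fintype P] [DecidableEq P] (female : P → Bool)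
    (R1 R2 : ℕ) (f : P → Fin (R1 + R2)) : Prop :=
  (∀ r, (univ.filter fun p => f p = r).card ≤ roomCap R1 R2 r) ∧
    ∀ p q, f p = f q → female p = female q

/-- Total patient-fit score of an assignment: sum of `w` over the room occupancy sets. -/
def assignScore {P : Type*} [Fintype P] [DecidableEq P] (w : Finset P → ℕ)
    (R1 R2 : ℕ) (f : P → Fin (R1 + R2)) : ℕ :=
  ∑ r : Fin (R1 + R2), w (univ.filter fun p => f p = r)

/-- The graph `G_I` on patients plus `k` auxiliary vertices: edges join two patients of
the same sex, any patient with any auxiliary vertex, and two auxiliary vertices of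
`X₂` (indices `≥ a`). -/
def GIp {P : Type*} (female : P → Bool) (k a : ℕ) : SimpleGraph (P ⊕ Fin k) :=
  SimpleGraph.fromRel fun u v =>
    match u, v with
    | Sum.inl p, Sum.inl q => female p = female q
    | Sum.inl _, Sum.inr _ => True
    | Sum.inr x, Sum.inr y => a ≤ x.val ∧ a ≤ y.val
    | _, _ => False

/-- The set of patient endpoints of an edge of `G_I`. -/
def patientsOf {P : Type*} [Fintype P] [DecidableEq P] {k : ℕ}
    (e : Sym2 (P ⊕ Fin k)) : Finset P :=
  univ.filter fun p => Sum.inl p ∈ e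

/-- The weight of a matching: the sum of edge weights, where an edge between patients
`u,v` costs `w {u,v}`, a patient–auxiliary edge costs `w {p}` and an edge between two
auxiliary vertices costs `w ∅ = 0`. -/
noncomputable def matchWeight {P : Type*} [Fintype P] [DecidableEq P] {k : ℕ}
    (w : Finset P → ℕ) (female : P → Bool) (a : ℕ)
    (m : (GIp female k a).Subgraph) : ℕ :=
  ∑ᶠ e ∈ m.edgeSet, w (patientsOf e)


set_option linter.unusedSectionVars false

section AuxLemmas

variable {P : Type*} [Fintype P] [DecidableEq P] {female : P → Bool} {k a : ℕ}

lemma gip_adj_inl_inl {p q : P} :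
    (GIp female k a).Adj (Sum.inl p) (Sum.inl q) ↔ p ≠ q ∧ female p = female q := by
  simp only [GIp, SimpleGraph.fromRel_adj, ne_eq, Sum.inl.injEq]
  constructor
  · rintro ⟨h1, h2 | h2⟩
    · exact ⟨h1, h2⟩
    · exact ⟨h1, h2.symm⟩
  · rintro ⟨h1, h2⟩; exact ⟨h1, Or.inl h2⟩

lemma gip_adj_inl_inr {p : P} {j : Fin k} :
    (GIp female k a).Adj (Sum.inl p) (Sum.inr j) := by
  simp [GIp, SimpleGraph.fromRel_adj]

lemma gip_adj_inr_inr {i j : Fin k} :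
    (GIp (P := P) female k a).Adj (Sum.inr i) (Sum.inr j) ↔ i ≠ j ∧ a ≤ i.val ∧ a ≤ j.val := by
  simp only [GIp, SimpleGraph.fromRel_adj, ne_eq, Sum.inr.injEq]
  constructor
  · rintro ⟨h1, ⟨h2, h3⟩ | ⟨h2, h3⟩⟩
    · exact ⟨h1, h2, h3⟩
    · exact ⟨h1, h3, h2⟩
  · rintro ⟨h1, h2, h3⟩; exact ⟨h1, Or.inl ⟨h2, h3⟩⟩

lemma gip_not_adj_inr_inr_of_lt {i j : Fin k} (h : i.val < a) :
    ¬ (GIp (P := P) female k a).Adj (Sum.inr i) (Sum.inr j) := by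
  rw [gip_adj_inr_inr]; omega

lemma mem_patientsOf {p : P} {e : Sym2 (P ⊕ Fin k)} :
    p ∈ patientsOf e ↔ Sum.inl p ∈ e := by simp [patientsOf]

lemma patientsOf_inl_inl {p q : P} :
    patientsOf (k := k) s(Sum.inl p, Sum.inl q) = {p, q} := by
  ext x; simp [patientsOf, Sym2.mem_iff]

lemma patientsOf_inl_inr {p : P} {j : Fin k} :
    patientsOf s(Sum.inl p, Sum.inr j) = {p} := by
  ext x; simp [patientsOf, Sym2.mem_iff]

lemma patientsOf_inr_inr {i j : Fin k} :
    patientsOf (P := P) s(Sum.inr i, Sum.inr j) = ∅ := by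
  ext x; simp [patientsOf, Sym2.mem_iff]

def auxOf {k : ℕ} (P : Type*) [Fintype P] [DecidableEq P] (e : Sym2 (P ⊕ Fin k)) : Finset (Fin k) :=
  univ.filter fun j => Sum.inr j ∈ e

lemma auxOf_inl_inl {p q : P} : auxOf P (k := k) s(Sum.inl p, Sum.inl q) = ∅ := by
  ext x; simp [auxOf, Sym2.mem_iff]

lemma auxOf_inl_inr {p : P} {j : Fin k} : auxOf P s(Sum.inl p, Sum.inr j) = {j} := by
  ext x; simp [auxOf, Sym2.mem_iff]

lemma auxOf_inr_inr {i j : Fin k} : auxOf P s(Sum.inr i, Sum.inr j) = {i, j} := by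
  ext x; simp [auxOf, Sym2.mem_iff]

end AuxLemmas

section InvSub

variable {V : Type*} {G : SimpleGraph V}

def invSub (G : SimpleGraph V) (π : V → V) (hadj : ∀ v, G.Adj v (π v))
    (hinv : Function.Involutive π) : G.Subgraph where
  verts := Set.univ
  Adj u v := π u = v
  adj_sub := by rintro u v rfl; exact hadj u
  edge_vert := fun _ => Set.mem_univ _
  symm := ⟨by rintro u v rfl; exact hinv u⟩

lemma invSub_isPerfectMatching (π : V → V) (hadj : ∀ v, G.Adj v (π v))
    (hinv : Function.Involutive π) : (invSub G π hadj hinv).IsPerfectMatching := by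
  refine ⟨fun v _ => ⟨π v, rfl, fun y hy => ?_⟩, fun v => Set.mem_univ v⟩
  exact (show π v = y from hy).symm

lemma invSub_adj (π : V → V) (hadj : ∀ v, G.Adj v (π v))
    (hinv : Function.Involutive π) (v : V) : (invSub G π hadj hinv).Adj v (π v) := rfl

lemma invSub_uniq (π : V → V) (hadj : ∀ v, G.Adj v (π v))
    (hinv : Function.Involutive π) :
    ∀ v u, (invSub G π hadj hinv).Adj v u → u = π v := fun v u h => (show π v = u from h).symm

lemma exists_invol {H : G.Subgraph} (hH : H.IsPerfectMatching) :
    ∃ π : V → V, (∀ v, H.Adj v (π v)) ∧ (∀ v u, H.Adj v u → u = π v) := by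
  choose π hπ huniq using fun v => hH.1 (hH.2 v)
  exact ⟨π, hπ, huniq⟩

lemma edge_eq_of_mem {H : G.Subgraph} {π : V → V}
    (huniq : ∀ v u, H.Adj v u → u = π v)
    {e : Sym2 V} (he : e ∈ H.edgeSet) {v : V} (hv : v ∈ e) : e = s(v, π v) := by
  obtain ⟨b, rfl⟩ := Sym2.mem_iff_exists.mp hv
  rw [SimpleGraph.Subgraph.mem_edgeSet] at he
  rw [huniq v b he]

end InvSub

section Score

variable {P : Type*} [Fintype P] [DecidableEq P] {female : P → Bool} {k a R1 R2 : ℕ}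

lemma score_eq_weight (w : Finset P → ℕ) (hwempty : w ∅ = 0)
    (H : (GIp female k a).Subgraph) (π : (P ⊕ Fin k) → (P ⊕ Fin k))
    (hadj : ∀ v, H.Adj v (π v)) (huniq : ∀ v u, H.Adj v u → u = π v)
    (f : P → Fin (R1 + R2))
    (hf : ∀ p : P, (univ.filter fun q => f q = f p)
        = patientsOf (s(Sum.inl p, π (Sum.inl p)))) :
    assignScore w R1 R2 f = matchWeight w female a H := by
  classical
  have hEfin : H.edgeSet.Finite := Set.toFinite _
  set E : Finset (Sym2 (P ⊕ Fin k)) := hEfin.toFinset with hE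
  have hmw : matchWeight w female a H = ∑ e ∈ E, w (patientsOf e) := by
    rw [matchWeight, ← finsum_mem_coe_finset, hE, Set.Finite.coe_toFinset]
  have hmemE : ∀ e, e ∈ E ↔ e ∈ H.edgeSet := fun e => hEfin.mem_toFinset
  have hEdgeMem : ∀ p : P, s(Sum.inl p, π (Sum.inl p)) ∈ E :=
    fun p => (hmemE _).2 (SimpleGraph.Subgraph.mem_edgeSet.2 (hadj _))
  have hC : ∀ e ∈ E, ∀ p : P, Sum.inl p ∈ e → e = s(Sum.inl p, π (Sum.inl p)) := by
    intro e he p hp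
    exact edge_eq_of_mem huniq ((hmemE e).1 he) hp
  have h1 : assignScore w R1 R2 f =
      ∑ r ∈ univ.filter (fun r : Fin (R1+R2) =>
        ((univ.filter fun p => f p = r)).Nonempty), w (univ.filter fun p => f p = r) := by
    rw [assignScore]
    refine (Finset.sum_subset (filter_subset _ _) ?_).symm
    intro r _ hr
    simp only [mem_filter, mem_univ, true_and] at hr
    rw [not_nonempty_iff_eq_empty.mp hr, hwempty]
  have h2 : ∑ e ∈ E, w (patientsOf e) =
      ∑ e ∈ E.filter (fun e => (patientsOf e).Nonempty), w (patientsOf e) := by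
    refine (Finset.sum_subset (filter_subset _ _) ?_).symm
    intro e he hne
    simp only [mem_filter, he, true_and] at hne
    rw [not_nonempty_iff_eq_empty.mp hne, hwempty]
  rw [h1, hmw, h2]
  refine Finset.sum_bij
    (fun r hr => s(Sum.inl (Exists.choose (Finset.mem_filter.mp hr).2),
      π (Sum.inl (Exists.choose (Finset.mem_filter.mp hr).2)))) ?_ ?_ ?_ ?_
  · intro r hr
    set p := Exists.choose (Finset.mem_filter.mp hr).2 with hp
    refine Finset.mem_filter.mpr ⟨hEdgeMem p, ⟨p, ?_⟩⟩
    rw [mem_patientsOf]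
    exact Sym2.mem_mk_left _ _
  · intro r1 hr1 r2 hr2 h
    set p1 := Exists.choose (Finset.mem_filter.mp hr1).2 with hp1
    set p2 := Exists.choose (Finset.mem_filter.mp hr2).2 with hp2
    have hs1 : p1 ∈ univ.filter fun p => f p = r1 :=
      Exists.choose_spec (Finset.mem_filter.mp hr1).2
    have hs2 : p2 ∈ univ.filter fun p => f p = r2 :=
      Exists.choose_spec (Finset.mem_filter.mp hr2).2
    simp only [mem_filter, mem_univ, true_and] at hs1 hs2
    have h' : s(Sum.inl p1, π (Sum.inl p1)) = s(Sum.inl p2, π (Sum.inl p2)) := h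
    have : p2 ∈ patientsOf (s(Sum.inl p1, π (Sum.inl p1))) := by
      rw [h', mem_patientsOf]; exact Sym2.mem_mk_left _ _
    rw [← hf p1, mem_filter] at this
    rw [← hs1, ← hs2, this.2]
  · intro e he
    obtain ⟨heE, hne⟩ := Finset.mem_filter.mp he
    obtain ⟨q, hq⟩ := hne
    rw [mem_patientsOf] at hq
    have heq : e = s(Sum.inl q, π (Sum.inl q)) := hC e heE q hq
    have hrmem : f q ∈ univ.filter (fun r : Fin (R1+R2) =>
        ((univ.filter fun p => f p = r)).Nonempty) := by
      refine Finset.mem_filter.mpr ⟨mem_univ _, ⟨q, ?_⟩⟩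
      simp
    refine ⟨f q, hrmem, ?_⟩
    set p' := Exists.choose (Finset.mem_filter.mp hrmem).2 with hp'
    have hs' : p' ∈ univ.filter fun p => f p = f q :=
      Exists.choose_spec (Finset.mem_filter.mp hrmem).2
    rw [hf q, mem_patientsOf, ← heq] at hs'
    exact (hC e heE p' hs').symm
  · intro r hr
    set p := Exists.choose (Finset.mem_filter.mp hr).2 with hp
    have hs : p ∈ univ.filter fun q => f q = r :=
      Exists.choose_spec (Finset.mem_filter.mp hr).2
    simp only [mem_filter, mem_univ, true_and] at hs
    show w (filter (fun q => f q = r) univ) = w (patientsOf s(Sum.inl p, π (Sum.inl p)))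
    rw [← hs, hf p]

end Score

section Count

variable {P : Type*} [Fintype P] [DecidableEq P] {female : P → Bool} {k a : ℕ}

lemma sum_roomCap (R1 R2 : ℕ) : ∑ r : Fin (R1 + R2), roomCap R1 R2 r = R1 + 2 * R2 := by
  have h0 : ∑ r : Fin (R1 + R2), roomCap R1 R2 r
      = ∑ i ∈ Finset.range (R1 + R2), (if i < R1 then 1 else 2) := by
    simp only [roomCap]
    exact Fin.sum_univ_eq_sum_range (fun i => if i < R1 then 1 else 2) (R1 + R2)
  rw [h0, Finset.range_eq_Ico, ← Finset.sum_Ico_consecutive _ (Nat.zero_le R1) (Nat.le_add_right R1 R2)]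
  have h1 : ∑ i ∈ Finset.Ico 0 R1, (if i < R1 then 1 else 2) = R1 := by
    rw [Finset.sum_congr rfl (fun i hi => if_pos (Finset.mem_Ico.mp hi).2), Finset.sum_const,
      Nat.card_Ico, smul_eq_mul]; omega
  have h2 : ∑ i ∈ Finset.Ico R1 (R1 + R2), (if i < R1 then 1 else 2) = 2 * R2 := by
    rw [Finset.sum_congr rfl (fun i hi => if_neg (by have := (Finset.mem_Ico.mp hi).1; omega)),
      Finset.sum_const, Nat.card_Ico, smul_eq_mul]; omega
  omega

lemma card_dbl_filter (R1 R2 : ℕ) :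
    (univ.filter fun r : Fin (R1 + R2) => ¬ (r : ℕ) < R1).card = R2 := by
  have h0 : (univ.filter fun r : Fin (R1 + R2) => ¬ (r : ℕ) < R1).card
      = ∑ r : Fin (R1 + R2), (if ¬ (r : ℕ) < R1 then 1 else 0) := by
    rw [Finset.card_filter]
  rw [h0, Fin.sum_univ_eq_sum_range (fun i => if ¬ i < R1 then 1 else 0),
    Finset.range_eq_Ico, ← Finset.sum_Ico_consecutive _ (Nat.zero_le R1) (Nat.le_add_right R1 R2)]
  have h1 : ∑ i ∈ Finset.Ico 0 R1, (if ¬ i < R1 then 1 else 0) = 0 := by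
    rw [Finset.sum_congr rfl (fun i hi => if_neg (by simp [(Finset.mem_Ico.mp hi).2]))]
    simp
  have h2 : ∑ i ∈ Finset.Ico R1 (R1 + R2), (if ¬ i < R1 then 1 else 0) = R2 := by
    rw [Finset.sum_congr rfl (fun i hi => if_pos (by have := (Finset.mem_Ico.mp hi).1; omega)),
      Finset.sum_const, Nat.card_Ico, smul_eq_mul]; omega
  omega

lemma card_le_of_feasible {R1 R2 : ℕ} {f : P → Fin (R1 + R2)}
    (hf : FeasibleAssign female R1 R2 f) : Fintype.card P ≤ R1 + 2 * R2 := by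
  have h1 : (univ : Finset P).card = ∑ r : Fin (R1 + R2), (univ.filter fun p => f p = r).card :=
    Finset.card_eq_sum_card_fiberwise (fun x _ => mem_univ _)
  calc Fintype.card P = (univ : Finset P).card := (Finset.card_univ).symm
    _ = ∑ r : Fin (R1 + R2), (univ.filter fun p => f p = r).card := h1
    _ ≤ ∑ r : Fin (R1 + R2), roomCap R1 R2 r := Finset.sum_le_sum (fun r _ => hf.1 r)
    _ = R1 + 2 * R2 := sum_roomCap R1 R2

end Count

section Part1

variable {P : Type*} [Fintype P] [DecidableEq P] {female : P → Bool} {k a : ℕ}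

lemma part1 {R1 R2 : ℕ} (w : Finset P → ℕ) (hR2 : 1 ≤ R2) (hwempty : w ∅ = 0)
    (hk : k = 2 * (R1 + R2) - Fintype.card P)
    (ha : a = Fintype.card P - 2 * R2)
    (hn : Fintype.card P ≤ R1 + 2 * R2)
    (H : (GIp female k a).Subgraph) (hH : H.IsPerfectMatching) :
    ∃ f : P → Fin (R1 + R2), FeasibleAssign female R1 R2 f ∧
      assignScore w R1 R2 f = matchWeight w female a H := by
  classical
  obtain ⟨π, hadj, huniq⟩ := exists_invol hH
  have hEfin : H.edgeSet.Finite := Set.toFinite _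
  set E : Finset (Sym2 (P ⊕ Fin k)) := hEfin.toFinset with hE
  have hmemE : ∀ e, e ∈ E ↔ e ∈ H.edgeSet := fun e => hEfin.mem_toFinset
  have hEdgeMem : ∀ v : P ⊕ Fin k, s(v, π v) ∈ E :=
    fun v => (hmemE _).2 (SimpleGraph.Subgraph.mem_edgeSet.2 (hadj _))
  have hC : ∀ e ∈ E, ∀ v : P ⊕ Fin k, v ∈ e → e = s(v, π v) := by
    intro e he v hv
    exact edge_eq_of_mem huniq ((hmemE e).1 he) hv
  -- basic card facts per edge
  have hF1 : ∀ e ∈ E, (patientsOf e).card + (auxOf P e).card = 2 := by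
    intro e he
    rw [hmemE] at he
    induction e using Sym2.ind with
    | _ x y =>
      have hxy : H.Adj x y := SimpleGraph.Subgraph.mem_edgeSet.1 he
      have hne : x ≠ y := (H.adj_sub hxy).ne
      rcases x with p | i <;> rcases y with q | j
      · have hpq : p ≠ q := fun h => hne (by rw [h])
        rw [patientsOf_inl_inl, auxOf_inl_inl, Finset.card_pair hpq]; simp
      · rw [patientsOf_inl_inr, auxOf_inl_inr]; simp
      · rw [Sym2.eq_swap, patientsOf_inl_inr, auxOf_inl_inr]; simp
      · have hij : i ≠ j := fun h => hne (by rw [h])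
        rw [patientsOf_inr_inr, auxOf_inr_inr, Finset.card_pair hij]; simp
  -- fibers
  have hfib : ∀ e ∈ E, (univ.filter fun p : P => s(Sum.inl p, π (Sum.inl p)) = e)
      = patientsOf e := by
    intro e he
    ext q
    simp only [mem_filter, mem_univ, true_and, mem_patientsOf]
    constructor
    · rintro rfl; exact Sym2.mem_mk_left _ _
    · intro hq; exact (hC e he _ hq).symm
  have hF2 : Fintype.card P = ∑ e ∈ E, (patientsOf e).card := by
    rw [← Finset.card_univ,
      Finset.card_eq_sum_card_fiberwise (f := fun p : P => s(Sum.inl p, π (Sum.inl p)))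
        (t := E) (fun p _ => hEdgeMem _)]
    exact Finset.sum_congr rfl (fun e he => by rw [hfib e he])
  have hfibA : ∀ e ∈ E, (univ.filter fun j : Fin k => s(Sum.inr j, π (Sum.inr j)) = e)
      = auxOf P e := by
    intro e he
    ext j
    simp only [mem_filter, mem_univ, true_and, auxOf]
    constructor
    · rintro rfl; exact Sym2.mem_mk_left _ _
    · intro hq; exact (hC e he _ hq).symm
  have hF3 : k = ∑ e ∈ E, (auxOf P e).card := by
    have := Finset.card_eq_sum_card_fiberwise
      (f := fun j : Fin k => s(Sum.inr j, π (Sum.inr j))) (t := E)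
      (s := (univ : Finset (Fin k))) (fun j _ => hEdgeMem _)
    rw [Finset.card_univ, Fintype.card_fin] at this
    exact this.trans (Finset.sum_congr rfl (fun e he => congrArg Finset.card (hfibA e he)))
  have hF4 : 2 * E.card = Fintype.card P + k := by
    have : ∑ e ∈ E, ((patientsOf e).card + (auxOf P e).card) = ∑ e ∈ E, 2 :=
      Finset.sum_congr rfl hF1
    rw [Finset.sum_add_distrib, ← hF2, ← hF3] at this
    rw [Finset.sum_const, smul_eq_mul] at this
    omega
  set Epat := E.filter (fun e => (patientsOf e).card = 2) with hEpat
  set Esgl := E.filter (fun e => (patientsOf e).card = 1) with hEsgl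
  have hdisj : Disjoint Epat Esgl := by
    rw [Finset.disjoint_left]
    intro e h1 h2
    rw [hEpat, Finset.mem_filter] at h1
    rw [hEsgl, Finset.mem_filter] at h2
    omega
  have hsub : Epat ∪ Esgl ⊆ E :=
    Finset.union_subset (Finset.filter_subset _ _) (Finset.filter_subset _ _)
  have hDsum : 2 * Epat.card + Esgl.card ≤ Fintype.card P := by
    have h1 : ∑ e ∈ Epat, (patientsOf e).card = 2 * Epat.card := by
      rw [Finset.sum_congr rfl (fun e he => (Finset.mem_filter.mp he).2), Finset.sum_const,
        smul_eq_mul]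
      ring
    have h2 : ∑ e ∈ Esgl, (patientsOf e).card = Esgl.card := by
      rw [Finset.sum_congr rfl (fun e he => (Finset.mem_filter.mp he).2), Finset.sum_const,
        smul_eq_mul]
      ring
    have h3 : ∑ e ∈ Epat ∪ Esgl, (patientsOf e).card ≤ ∑ e ∈ E, (patientsOf e).card :=
      Finset.sum_le_sum_of_subset hsub
    rw [Finset.sum_union hdisj, h1, h2, ← hF2] at h3
    exact h3
  have hak : a ≤ k := by omega
  have hPA : ∀ j : Fin k, (j : ℕ) < a → ∃ p : P, π (Sum.inr j) = Sum.inl p := by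
    intro j hj
    rcases hπj : π (Sum.inr j) with p | m
    · exact ⟨p, rfl⟩
    · exfalso
      have hadjj := hadj (Sum.inr j)
      rw [hπj] at hadjj
      exact gip_not_adj_inr_inr_of_lt hj (H.adj_sub hadjj)
  have hAle : a ≤ Esgl.card := by
    have hcard : (univ : Finset (Fin a)).card ≤ Esgl.card := by
      apply Finset.card_le_card_of_injOn
        (fun i : Fin a => s(Sum.inr (Fin.castLE hak i), π (Sum.inr (Fin.castLE hak i))))
      · intro i _
        obtain ⟨p, hp⟩ := hPA (Fin.castLE hak i) (by simpa using i.2)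
        simp only [hEsgl, Finset.mem_coe, Finset.mem_filter]
        refine ⟨hEdgeMem _, ?_⟩
        rw [hp, Sym2.eq_swap, patientsOf_inl_inr, Finset.card_singleton]
      · intro i1 _ i2 _ heq
        simp only at heq
        have hm : (Sum.inr (Fin.castLE hak i1) : P ⊕ Fin k)
            ∈ s(Sum.inr (Fin.castLE hak i2), π (Sum.inr (Fin.castLE hak i2))) := by
          rw [← heq]; exact Sym2.mem_mk_left _ _
        rw [Sym2.mem_iff] at hm
        rcases hm with hm | hm
        · exact Fin.castLE_injective hak (Sum.inr.inj hm)
        · obtain ⟨p, hp⟩ := hPA (Fin.castLE hak i2) (by simpa using i2.2)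
          rw [hp] at hm
          exact absurd hm (by simp)
    simpa using hcard
  have hEc : Epat.card + Esgl.card ≤ E.card := by
    calc Epat.card + Esgl.card = (Epat ∪ Esgl).card := (Finset.card_union_of_disjoint hdisj).symm
      _ ≤ E.card := Finset.card_le_card hsub
  have hDle : Epat.card ≤ R2 := by omega
  have hDS : Epat.card + Esgl.card ≤ R1 + R2 := by omega
  have hposR : 0 < R1 + R2 := by omega
  -- room assignment for double edges
  set eD := Epat.equivFin with heD
  have hroomlt : ∀ x : {e // e ∈ Epat}, R1 + (eD x).val < R1 + R2 := fun x => by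
    have h1 := (eD x).2
    omega
  set roomD : {e // e ∈ Epat} → Fin (R1 + R2) := fun x => ⟨R1 + (eD x).val, hroomlt x⟩
    with hroomD
  have hroomDinj : Function.Injective roomD := by
    intro x y hxy
    apply eD.injective
    have h1 : R1 + (eD x).val = R1 + (eD y).val := congrArg Fin.val hxy
    exact Fin.ext (by omega)
  set imageD : Finset (Fin (R1 + R2)) := Finset.image roomD univ with himageD
  have hcardImageD : imageD.card = Epat.card := by
    rw [himageD, Finset.card_image_of_injective _ hroomDinj, Finset.card_univ, Fintype.card_coe]
  have hcompl : Esgl.card ≤ (imageDᶜ).card := by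
    rw [Finset.card_compl, hcardImageD]
    have h1 : Fintype.card (Fin (R1 + R2)) = R1 + R2 := Fintype.card_fin _
    omega
  set embS : {e // e ∈ Esgl} ↪ {r // r ∈ imageDᶜ} :=
    Esgl.equivFin.toEmbedding.trans
      ((Fin.castLEEmb hcompl).trans (imageDᶜ).equivFin.symm.toEmbedding) with hembS
  set roomOf : Sym2 (P ⊕ Fin k) → Fin (R1 + R2) := fun e =>
    if h : e ∈ Epat then roomD ⟨e, h⟩
    else if h1 : e ∈ Esgl then (embS ⟨e, h1⟩ : {r // r ∈ imageDᶜ}).val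
    else ⟨0, hposR⟩ with hroomOf
  have hroomOf_pat : ∀ (e) (h : e ∈ Epat), roomOf e = roomD ⟨e, h⟩ := by
    intro e h
    rw [hroomOf]
    exact dif_pos h
  have hnotSgl : ∀ e ∈ Epat, e ∉ Esgl := fun e h => Finset.disjoint_left.mp hdisj h
  have hroomOf_sgl : ∀ (e) (h : e ∈ Esgl), roomOf e = (embS ⟨e, h⟩ : {r // r ∈ imageDᶜ}).val := by
    intro e h
    have h1 : e ∉ Epat := fun hc => hnotSgl e hc h
    rw [hroomOf]
    simp only [dif_neg h1, dif_pos h]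
  have hmemD : ∀ (e) (h : e ∈ Epat), roomOf e ∈ imageD := by
    intro e h
    rw [hroomOf_pat e h, himageD]
    exact Finset.mem_image_of_mem _ (mem_univ _)
  have hmemDc : ∀ (e) (h : e ∈ Esgl), roomOf e ∉ imageD := by
    intro e h
    rw [hroomOf_sgl e h]
    have h2 := (embS ⟨e, h⟩).2
    rw [Finset.mem_compl] at h2
    exact h2
  have hinj : ∀ e1 e2, (e1 ∈ Epat ∨ e1 ∈ Esgl) → (e2 ∈ Epat ∨ e2 ∈ Esgl) →
      roomOf e1 = roomOf e2 → e1 = e2 := by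
    intro e1 e2 h1 h2 heq
    rcases h1 with h1 | h1 <;> rcases h2 with h2 | h2
    · rw [hroomOf_pat e1 h1, hroomOf_pat e2 h2] at heq
      exact Subtype.ext_iff.mp (hroomDinj heq)
    · exact absurd (heq ▸ hmemD e1 h1) (hmemDc e2 h2)
    · exact absurd (heq.symm ▸ hmemD e2 h2) (hmemDc e1 h1)
    · rw [hroomOf_sgl e1 h1, hroomOf_sgl e2 h2] at heq
      have := embS.injective (Subtype.ext heq)
      exact Subtype.ext_iff.mp this
  -- the assignment
  set f : P → Fin (R1 + R2) := fun p => roomOf (s(Sum.inl p, π (Sum.inl p))) with hfdef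
  have hedge_mem : ∀ p : P, s(Sum.inl p, π (Sum.inl p)) ∈ Epat ∨
      s(Sum.inl p, π (Sum.inl p)) ∈ Esgl := by
    intro p
    have hmem := hEdgeMem (Sum.inl p)
    have hc2 := hF1 _ hmem
    have hge1 : 1 ≤ (patientsOf (s(Sum.inl p, π (Sum.inl p)))).card :=
      Finset.card_pos.mpr ⟨p, mem_patientsOf.mpr (Sym2.mem_mk_left _ _)⟩
    have : (patientsOf (s(Sum.inl p, π (Sum.inl p)))).card = 1 ∨
        (patientsOf (s(Sum.inl p, π (Sum.inl p)))).card = 2 := by omega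
    rcases this with h | h
    · exact Or.inr (Finset.mem_filter.mpr ⟨hmem, h⟩)
    · exact Or.inl (Finset.mem_filter.mpr ⟨hmem, h⟩)
  have hfkey : ∀ p q : P, f q = f p →
      s(Sum.inl q, π (Sum.inl q)) = s(Sum.inl p, π (Sum.inl p)) := by
    intro p q h
    exact hinj _ _ (hedge_mem q) (hedge_mem p) h
  have hf : ∀ p : P, (univ.filter fun q => f q = f p)
      = patientsOf (s(Sum.inl p, π (Sum.inl p))) := by
    intro p
    ext q
    simp only [mem_filter, mem_univ, true_and, mem_patientsOf]
    constructor
    · intro h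
      rw [← hfkey p q h]
      exact Sym2.mem_mk_left _ _
    · intro hq
      have := hC _ (hEdgeMem (Sum.inl p)) _ hq
      rw [hfdef]
      simp only
      rw [← this]
  refine ⟨f, ⟨?_, ?_⟩, score_eq_weight w hwempty H π hadj huniq f hf⟩
  · -- capacities
    intro r
    by_cases hne : (univ.filter fun p => f p = r).Nonempty
    · obtain ⟨p, hp⟩ := hne
      have hfp : f p = r := (Finset.mem_filter.mp hp).2
      have hocc : (univ.filter fun q => f q = r)
          = patientsOf (s(Sum.inl p, π (Sum.inl p))) := by
        rw [← hfp]
        exact hf p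
      rw [hocc]
      rcases hedge_mem p with h | h
      · have hc2 : (patientsOf (s(Sum.inl p, π (Sum.inl p)))).card = 2 :=
          (Finset.mem_filter.mp h).2
        rw [hc2]
        have hr : r = roomD ⟨_, h⟩ := by rw [← hfp, hfdef]; exact hroomOf_pat _ h
        have hge : ¬ (r : ℕ) < R1 := by
          rw [hr, hroomD]
          simp only
          omega
        rw [roomCap, if_neg hge]
      · have hc1 : (patientsOf (s(Sum.inl p, π (Sum.inl p)))).card = 1 :=
          (Finset.mem_filter.mp h).2
        rw [hc1, roomCap]
        split <;> omega
    · rw [Finset.not_nonempty_iff_eq_empty.mp hne, Finset.card_empty]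
      exact Nat.zero_le _
  · -- homogeneity
    intro p q h
    have hkey := hfkey p q h.symm
    have hmemq : (Sum.inl q : P ⊕ Fin k) ∈ s(Sum.inl p, π (Sum.inl p)) := by
      rw [← hkey]
      exact Sym2.mem_mk_left _ _
    rw [Sym2.mem_iff] at hmemq
    rcases hmemq with hmemq | hmemq
    · rw [Sum.inl.inj hmemq]
    · have hadjpq : H.Adj (Sum.inl p) (Sum.inl q) := by
        rw [hmemq]
        exact hadj _
      exact (gip_adj_inl_inl.mp (H.adj_sub hadjpq)).2

end Part1

section Part2

variable {P : Type*} [Fintype P] [DecidableEq P] {female : P → Bool} {k a : ℕ}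

lemma part2 {R1 R2 : ℕ} (w : Finset P → ℕ) (hwempty : w ∅ = 0)
    (hk : k = 2 * (R1 + R2) - Fintype.card P)
    (ha : a = Fintype.card P - 2 * R2)
    (f : P → Fin (R1 + R2)) (hfeas : FeasibleAssign female R1 R2 f) :
    ∃ m : (GIp female k a).Subgraph, m.IsPerfectMatching ∧
      matchWeight w female a m = assignScore w R1 R2 f := by
  classical
  have hn : Fintype.card P ≤ R1 + 2 * R2 := card_le_of_feasible hfeas
  set c : Fin (R1 + R2) → ℕ := fun r => (univ.filter fun q => f q = r).card with hcdef
  have hc_le : ∀ r, c r ≤ 2 := by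
    intro r
    refine le_trans (hfeas.1 r) ?_
    rw [roomCap]
    split <;> omega
  have hmem_occ : ∀ p : P, p ∈ univ.filter fun q => f q = f p := by
    intro p; simp
  have hc_pos : ∀ p : P, 0 < c (f p) := fun p => Finset.card_pos.mpr ⟨p, hmem_occ p⟩
  set D' : Finset (Fin (R1 + R2)) := univ.filter (fun r => c r = 2) with hD'
  set S' : Finset (Fin (R1 + R2)) := univ.filter (fun r => c r = 1) with hS'
  have hnsum : Fintype.card P = ∑ r : Fin (R1 + R2), c r := by
    rw [← Finset.card_univ]
    exact Finset.card_eq_sum_card_fiberwise (fun x _ => mem_univ (f x))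
  have hsplit : ∑ r : Fin (R1 + R2), c r = 2 * D'.card + S'.card := by
    rw [← Finset.sum_filter_add_sum_filter_not univ (fun r => c r = 2) c]
    have h1 : ∑ r ∈ univ.filter (fun r => c r = 2), c r = 2 * D'.card := by
      rw [Finset.sum_congr rfl (fun r hr => (Finset.mem_filter.mp hr).2), Finset.sum_const,
        smul_eq_mul, hD']
      ring
    have h2 : ∑ r ∈ univ.filter (fun r => ¬ c r = 2), c r = S'.card := by
      rw [← Finset.sum_filter_add_sum_filter_not (univ.filter (fun r => ¬ c r = 2))
        (fun r => c r = 1) c]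
      have h3 : (univ.filter (fun r => ¬ c r = 2)).filter (fun r => c r = 1) = S' := by
        rw [Finset.filter_filter, hS']
        ext r
        simp only [Finset.mem_filter, mem_univ, true_and]
        constructor
        · rintro ⟨_, h⟩; exact h
        · intro h; exact ⟨by omega, h⟩
      have h4 : ∑ r ∈ ((univ.filter (fun r => ¬ c r = 2)).filter (fun r => ¬ c r = 1)), c r
          = 0 := by
        refine Finset.sum_eq_zero ?_
        intro r hr
        simp only [Finset.mem_filter, mem_univ, true_and] at hr
        have := hc_le r
        omega
      rw [h3, h4]
      have h5 : ∑ r ∈ S', c r = S'.card := by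
        rw [Finset.sum_congr rfl (fun r hr => (Finset.mem_filter.mp hr).2), Finset.sum_const,
          smul_eq_mul]
        ring
      rw [h5]
      omega
    rw [h1, h2]
  have hdub : D'.card ≤ R2 := by
    have hsubd : D' ⊆ univ.filter fun r : Fin (R1 + R2) => ¬ (r : ℕ) < R1 := by
      intro r hr
      rw [hD', Finset.mem_filter] at hr
      refine Finset.mem_filter.mpr ⟨mem_univ _, ?_⟩
      intro hlt
      have h1 := hfeas.1 r
      rw [roomCap, if_pos hlt] at h1
      simp only [hcdef] at hr
      omega
    calc D'.card ≤ _ := Finset.card_le_card hsubd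
      _ = R2 := card_dbl_filter R1 R2
  have hdisj : Disjoint D' S' := by
    rw [Finset.disjoint_left]
    intro r h1 h2
    rw [hD', Finset.mem_filter] at h1
    rw [hS', Finset.mem_filter] at h2
    omega
  have hdsR : D'.card + S'.card ≤ R1 + R2 := by
    calc D'.card + S'.card = (D' ∪ S').card := (Finset.card_union_of_disjoint hdisj).symm
      _ ≤ (univ : Finset (Fin (R1 + R2))).card := Finset.card_le_univ _
      _ = R1 + R2 := by rw [Finset.card_univ, Fintype.card_fin]
  set sN := S'.card with hsN
  have hsk : sN ≤ k := by omega
  have hkpar : (k - sN) % 2 = 0 := by omega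
  have has : a ≤ sN := by omega
  set eS := S'.equivFin with heS
  -- the involution
  set π : P ⊕ Fin k → P ⊕ Fin k := Sum.elim
    (fun p =>
      if h2 : ((univ.filter fun q => f q = f p).erase p).Nonempty then Sum.inl h2.choose
      else if h1 : f p ∈ S' then
        Sum.inr ⟨(eS ⟨f p, h1⟩ : Fin sN).val, lt_of_lt_of_le (eS ⟨f p, h1⟩).isLt hsk⟩
      else Sum.inl p)
    (fun j =>
      if hj : (j : ℕ) < sN then
        Sum.inl (Finset.card_eq_one.mp (Finset.mem_filter.mp (eS.symm ⟨(j : ℕ), hj⟩).2).2).choose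
      else if hje : ((j : ℕ) - sN) % 2 = 0 then
        Sum.inr ⟨(j : ℕ) + 1, by have := j.isLt; omega⟩
      else Sum.inr ⟨(j : ℕ) - 1, by have := j.isLt; omega⟩) with hπdef
  -- evaluation lemmas
  have hπ_inl2 : ∀ (p : P) (h2 : ((univ.filter fun q => f q = f p).erase p).Nonempty),
      π (Sum.inl p) = Sum.inl h2.choose := by
    intro p h2
    simp only [hπdef, Sum.elim_inl]
    rw [dif_pos h2]
  have hπ_inl1 : ∀ (p : P) (h2 : ¬ ((univ.filter fun q => f q = f p).erase p).Nonempty)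
      (h1 : f p ∈ S'),
      π (Sum.inl p) = Sum.inr ⟨(eS ⟨f p, h1⟩ : Fin sN).val,
        lt_of_lt_of_le (eS ⟨f p, h1⟩).isLt hsk⟩ := by
    intro p h2 h1
    simp only [hπdef, Sum.elim_inl]
    rw [dif_neg h2, dif_pos h1]
  have hπ_inr_lt : ∀ (j : Fin k) (hj : (j : ℕ) < sN),
      π (Sum.inr j) = Sum.inl
        (Finset.card_eq_one.mp (Finset.mem_filter.mp (eS.symm ⟨(j : ℕ), hj⟩).2).2).choose := by
    intro j hj
    simp only [hπdef, Sum.elim_inr]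
    rw [dif_pos hj]
  have hπ_inr_ge_even : ∀ (j : Fin k) (hj : ¬ (j : ℕ) < sN) (hje : ((j : ℕ) - sN) % 2 = 0),
      π (Sum.inr j) = Sum.inr ⟨(j : ℕ) + 1, by have := j.isLt; omega⟩ := by
    intro j hj hje
    simp only [hπdef, Sum.elim_inr]
    rw [dif_neg hj, dif_pos hje]
  have hπ_inr_ge_odd : ∀ (j : Fin k) (hj : ¬ (j : ℕ) < sN) (hje : ¬ ((j : ℕ) - sN) % 2 = 0),
      π (Sum.inr j) = Sum.inr ⟨(j : ℕ) - 1, by have := j.isLt; omega⟩ := by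
    intro j hj hje
    simp only [hπdef, Sum.elim_inr]
    rw [dif_neg hj, dif_neg hje]
  -- basic facts about the singleton choose
  have hone : ∀ (r : Fin (R1 + R2)) (h : c r = 1) (p : P), f p = r →
      (Finset.card_eq_one.mp h).choose = p := by
    intro r h p hp
    have hspec := (Finset.card_eq_one.mp h).choose_spec
    have hpm : p ∈ univ.filter fun q => f q = r := by simp [hp]
    rw [hspec, Finset.mem_singleton] at hpm
    exact hpm.symm
  have herase_mem : ∀ (p : P) (h2 : ((univ.filter fun q => f q = f p).erase p).Nonempty),
      h2.choose ≠ p ∧ f h2.choose = f p := by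
    intro p h2
    have hspec := h2.choose_spec
    rw [Finset.mem_erase] at hspec
    exact ⟨hspec.1, (Finset.mem_filter.mp hspec.2).2⟩
  have herase_c2 : ∀ (p : P), ((univ.filter fun q => f q = f p).erase p).Nonempty →
      (univ.filter fun q => f q = f p).card = 2 := by
    intro p h2
    have h0 : 0 < ((univ.filter fun q => f q = f p).erase p).card := Finset.card_pos.mpr h2
    rw [Finset.card_erase_of_mem (hmem_occ p)] at h0
    have hle := hc_le (f p)
    simp only [hcdef] at hle
    omega
  have hsingle : ∀ (p : P), ¬ ((univ.filter fun q => f q = f p).erase p).Nonempty →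
      f p ∈ S' := by
    intro p h2
    rw [Finset.not_nonempty_iff_eq_empty] at h2
    have h0 := Finset.card_erase_of_mem (hmem_occ p)
    rw [h2, Finset.card_empty] at h0
    have hp := hc_pos p
    have hl := hc_le (f p)
    rw [hS', Finset.mem_filter]
    refine ⟨mem_univ _, ?_⟩
    simp only [hcdef] at hp hl ⊢
    omega
  -- adjacency
  have hadjπ : ∀ v, (GIp female k a).Adj v (π v) := by
    rintro (p | j)
    · by_cases h2 : ((univ.filter fun q => f q = f p).erase p).Nonempty
      · rw [hπ_inl2 p h2]
        obtain ⟨hne, hfq⟩ := herase_mem p h2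
        rw [gip_adj_inl_inl]
        exact ⟨fun h => hne h.symm, hfeas.2 p h2.choose hfq.symm⟩
      · have h1 := hsingle p h2
        rw [hπ_inl1 p h2 h1]
        exact gip_adj_inl_inr
    · by_cases hj : (j : ℕ) < sN
      · rw [hπ_inr_lt j hj]
        exact gip_adj_inl_inr.symm
      · by_cases hje : ((j : ℕ) - sN) % 2 = 0
        · rw [hπ_inr_ge_even j hj hje, gip_adj_inr_inr]
          refine ⟨?_, by omega, by simp; omega⟩
          intro h
          have h' : (j : ℕ) = (j : ℕ) + 1 := by simpa using congrArg Fin.val h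
          omega
        · rw [hπ_inr_ge_odd j hj hje, gip_adj_inr_inr]
          refine ⟨?_, by omega, by simp; omega⟩
          intro h
          have h' : (j : ℕ) = (j : ℕ) - 1 := by simpa using congrArg Fin.val h
          omega
  -- involution
  have hinvπ : Function.Involutive π := by
    rintro (p | j)
    · by_cases h2 : ((univ.filter fun q => f q = f p).erase p).Nonempty
      · rw [hπ_inl2 p h2]
        obtain ⟨hne, hfq⟩ := herase_mem p h2
        have hpmem : p ∈ (univ.filter fun x => f x = f h2.choose).erase h2.choose :=
          Finset.mem_erase.mpr ⟨fun h => hne h.symm, by simp [hfq]⟩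
        have h2' : ((univ.filter fun x => f x = f h2.choose).erase h2.choose).Nonempty :=
          ⟨p, hpmem⟩
        rw [hπ_inl2 h2.choose h2']
        congr 1
        have hc2 := herase_c2 p h2
        have hcard : ((univ.filter fun x => f x = f h2.choose).erase h2.choose).card = 1 := by
          rw [Finset.card_erase_of_mem (hmem_occ h2.choose)]
          have hocceq : (univ.filter fun x => f x = f h2.choose)
              = (univ.filter fun x => f x = f p) := by rw [hfq]
          rw [hocceq]
          omega
        exact Finset.card_le_one.mp (le_of_eq hcard) _ h2'.choose_spec _ hpmem
      · have h1 := hsingle p h2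
        rw [hπ_inl1 p h2 h1]
        have hj : ((⟨(eS ⟨f p, h1⟩ : Fin sN).val,
            lt_of_lt_of_le (eS ⟨f p, h1⟩).isLt hsk⟩ : Fin k) : ℕ) < sN := (eS ⟨f p, h1⟩).isLt
        rw [hπ_inr_lt _ hj]
        congr 1
        have hroom : eS.symm ⟨((⟨(eS ⟨f p, h1⟩ : Fin sN).val,
            lt_of_lt_of_le (eS ⟨f p, h1⟩).isLt hsk⟩ : Fin k) : ℕ), hj⟩ = ⟨f p, h1⟩ := by
          have hmk : (⟨((⟨(eS ⟨f p, h1⟩ : Fin sN).val,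
              lt_of_lt_of_le (eS ⟨f p, h1⟩).isLt hsk⟩ : Fin k) : ℕ), hj⟩ : Fin sN)
              = eS ⟨f p, h1⟩ := Fin.ext rfl
          rw [hmk, Equiv.symm_apply_apply]
        refine hone _ ((Finset.mem_filter.mp (eS.symm ⟨_, hj⟩).2).2) p ?_
        rw [hroom]
    · by_cases hj : (j : ℕ) < sN
      · rw [hπ_inr_lt j hj]
        have hspec := (Finset.card_eq_one.mp
          (Finset.mem_filter.mp (eS.symm ⟨(j : ℕ), hj⟩).2).2).choose_spec
        have hfp0 : f (Finset.card_eq_one.mp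
            (Finset.mem_filter.mp (eS.symm ⟨(j : ℕ), hj⟩).2).2).choose
            = (eS.symm ⟨(j : ℕ), hj⟩).val := by
          exact (Finset.mem_filter.mp (Finset.eq_singleton_iff_unique_mem.mp hspec).1).2
        set p0 := (Finset.card_eq_one.mp
          (Finset.mem_filter.mp (eS.symm ⟨(j : ℕ), hj⟩).2).2).choose with hp0
        have hc1 : (univ.filter fun q => f q = f p0).card = 1 := by
          rw [hfp0]
          exact (Finset.mem_filter.mp (eS.symm ⟨(j : ℕ), hj⟩).2).2
        have h2 : ¬ ((univ.filter fun q => f q = f p0).erase p0).Nonempty := by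
          rw [Finset.not_nonempty_iff_eq_empty, ← Finset.card_eq_zero,
            Finset.card_erase_of_mem (hmem_occ p0), hc1]
        have h1 : f p0 ∈ S' := hsingle p0 h2
        rw [hπ_inl1 p0 h2 h1]
        congr 1
        have hsub : (⟨f p0, h1⟩ : {r // r ∈ S'}) = eS.symm ⟨(j : ℕ), hj⟩ :=
          Subtype.ext hfp0
        apply Fin.ext
        show (eS ⟨f p0, h1⟩ : Fin sN).val = (j : ℕ)
        rw [hsub, Equiv.apply_symm_apply]
      · by_cases hje : ((j : ℕ) - sN) % 2 = 0
        · rw [hπ_inr_ge_even j hj hje]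
          have hj' : ¬ ((⟨(j : ℕ) + 1, by have := j.isLt; omega⟩ : Fin k) : ℕ) < sN := by
            simp; omega
          have hje' : ¬ (((⟨(j : ℕ) + 1, by have := j.isLt; omega⟩ : Fin k) : ℕ) - sN) % 2
              = 0 := by simp; omega
          rw [hπ_inr_ge_odd _ hj' hje']
          apply congrArg
          apply Fin.ext
          simp
        · rw [hπ_inr_ge_odd j hj hje]
          have hge1 : 1 ≤ (j : ℕ) := by omega
          have hj' : ¬ ((⟨(j : ℕ) - 1, by have := j.isLt; omega⟩ : Fin k) : ℕ) < sN := by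
            simp; omega
          have hje' : (((⟨(j : ℕ) - 1, by have := j.isLt; omega⟩ : Fin k) : ℕ) - sN) % 2
              = 0 := by simp; omega
          rw [hπ_inr_ge_even _ hj' hje']
          apply congrArg
          apply Fin.ext
          simp
          omega
  -- the fiber property
  have hf : ∀ p : P, (univ.filter fun q => f q = f p)
      = patientsOf (s(Sum.inl p, π (Sum.inl p))) := by
    intro p
    by_cases h2 : ((univ.filter fun q => f q = f p).erase p).Nonempty
    · rw [hπ_inl2 p h2, patientsOf_inl_inl]
      obtain ⟨hne, hfq⟩ := herase_mem p h2
      have hc2 := herase_c2 p h2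
      refine (Finset.eq_of_subset_of_card_le ?_ ?_).symm
      · intro x hx
        rw [Finset.mem_insert, Finset.mem_singleton] at hx
        rcases hx with h | h
        · rw [h]; exact hmem_occ p
        · rw [h]; simp [hfq]
      · rw [Finset.card_pair (fun h => hne h.symm)]
        omega
    · have h1 := hsingle p h2
      rw [hπ_inl1 p h2 h1, patientsOf_inl_inr]
      have hc1 : (univ.filter fun q => f q = f p).card = 1 := (Finset.mem_filter.mp h1).2
      refine (Finset.eq_of_subset_of_card_le ?_ ?_).symm
      · intro x hx
        rw [Finset.mem_singleton] at hx
        rw [hx]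
        exact hmem_occ p
      · rw [Finset.card_singleton]
        omega
  refine ⟨invSub _ π hadjπ hinvπ, invSub_isPerfectMatching π hadjπ hinvπ, ?_⟩
  exact (score_eq_weight w hwempty _ π (invSub_adj π hadjπ hinvπ)
    (invSub_uniq π hadjπ hinvπ) f hf).symm

end Part2

/-- If `H` is a perfect matching in `G_I` of weight `ℓ(H)`, then the
corresponding room assignment has score `ℓ(H)`; consequently a minimum-weight perfect
matching yields an optimal RMP solution. -/
theorem stmt_17 {P : Type*} [Fintype P] [DecidableEq P] (female : P → Bool)
    (R1 R2 k a : ℕ) (w : Finset P → ℕ)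
    (hR2 : 1 ≤ R2) (hwempty : w ∅ = 0)
    (hk : k = 2 * (R1 + R2) - Fintype.card P)
    (ha : a = Fintype.card P - 2 * R2)
    (hfeas : ∃ f : P → Fin (R1 + R2), FeasibleAssign female R1 R2 f)
    (H : (GIp female k a).Subgraph) (hH : H.IsPerfectMatching) :
    (∃ f : P → Fin (R1 + R2), FeasibleAssign female R1 R2 f ∧
      assignScore w R1 R2 f = matchWeight w female a H) ∧
    (IsLeast {n | ∃ m : (GIp female k a).Subgraph,
        m.IsPerfectMatching ∧ matchWeight w female a m = n}
        (matchWeight w female a H) →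
      IsLeast {n | ∃ f : P → Fin (R1 + R2),
        FeasibleAssign female R1 R2 f ∧ assignScore w R1 R2 f = n}
        (matchWeight w female a H)) := by
  classical
  obtain ⟨f0, hf0⟩ := hfeas
  have hn : Fintype.card P ≤ R1 + 2 * R2 := card_le_of_feasible hf0
  have hpart1 := part1 w hR2 hwempty hk ha hn H hH
  refine ⟨hpart1, ?_⟩
  intro hleast
  constructor
  · exact hpart1
  · rintro x ⟨f, hfx, rfl⟩
    obtain ⟨m, hm, hmw⟩ := part2 w hwempty hk ha f hfx
    have hle := hleast.2 ⟨m, hm, rfl⟩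
    omega
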